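/- arXiv:2012.01640 — 2 statements merged into one kernel-verified Lean document; each statement's English description precedes it below -/
import Mathlib

section
/- Let X and Y be topological spaces, Y a convex subset of a topological vector space, and let P : X → 2^Y be a correspondence with open lower sections. Then the correspondence co P : X → 2^Y defined by (co P)(x) = co(P(x)) also has open lower sections. -/
/-! A point `y` lies in `co P(x)` iff it lies in the convex hull of some finite `t ⊆ P(x)`. The
condition `t ⊆ P(x')` cuts out the finite intersection of the open lower sections of the points
of `t`, an open neighbourhood of `x` on which `y ∈ co P(x')` persists. -/

theorem isOpen_setOf_mem_convexHull {𝕜 X E : Type*} [Field 𝕜] [LinearOrder 𝕜]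
    [IsStrictOrderedRing 𝕜] [TopologicalSpace X] [AddCommGroup E] [Module 𝕜 E]
    (P : X → Set E) (hop : ∀ x, ∀ z ∈ P x, IsOpen {x' : X | z ∈ P x'}) (y : E) :
    IsOpen {x : X | y ∈ convexHull 𝕜 (P x)} := by
  refine isOpen_iff_forall_mem_open.2 fun x hx => ?_
  rw [Set.mem_ofPred_eq, convexHull_eq_union_convexHull_finite_subsets, Set.mem_iUnion₂] at hx
  obtain ⟨t, htP, hyt⟩ := hx
  refine ⟨⋂ z ∈ t, {x' : X | z ∈ P x'}, fun x' hx' => ?_,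
    isOpen_biInter_finset fun z hz => hop x z (htP hz), Set.mem_iInter₂.2 fun z hz => htP hz⟩
  exact convexHull_mono (fun z hz => Set.mem_iInter₂.1 hx' z hz) hyt

theorem stmt10_general {X E : Type*} [TopologicalSpace X] [AddCommGroup E] [Module ℝ E]
    (Y : Set E) (P : X → Set E) (hPY : ∀ x, P x ⊆ Y)
    (hop : ∀ y ∈ Y, IsOpen {x : X | y ∈ P x}) :
    ∀ y ∈ Y, IsOpen {x : X | y ∈ convexHull ℝ (P x)} :=
  fun y _ => isOpen_setOf_mem_convexHull P (fun x z hz => hop z (hPY x hz)) y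

/-- Shafer–Sonnenschein Lemma 5.1: if `P : X → 2^Y` has open lower sections,
where `Y` is a convex subset of a topological vector space, then so does
`co P`. -/
theorem stmt10 {X E : Type*} [TopologicalSpace X] [AddCommGroup E] [Module ℝ E]
    [TopologicalSpace E] [IsTopologicalAddGroup E] [ContinuousSMul ℝ E]
    (Y : Set E) (hY : Convex ℝ Y) (P : X → Set E) (hPY : ∀ x, P x ⊆ Y)
    (hop : ∀ y ∈ Y, IsOpen {x : X | y ∈ P x}) :
    ∀ y ∈ Y, IsOpen {x : X | y ∈ convexHull ℝ (P x)} :=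
  stmt10_general Y P hPY hop
end

section
/- Let Γ = (X_i, A_i, P_i)_{i∈I} satisfy, for each i ∈ I: X_i compact Hausdorff; A_i(x) ≠ ∅ for all x; cl A_i upper semicontinuous; A_i and P_i with open lower sections. Define F_i = {x ∈ X : x_i ∈ cl(A_i(x))} and K_i(x_i) = [F_i ∩ (X \ P_i^{-1}(x_i))] ∪ [X \ A_i^{-1}(x_i)] for x_i ∈ X_i. Then ⋂_{i∈I} ⋂_{x_i∈X_i} cl(K_i(x_i)) = ⋂_{i∈I} ⋂_{x_i∈X_i} K_i(x_i). -/
/-- Claim 1 in the proof of the main theorem: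
`⋂ᵢ ⋂_{xᵢ} cl Kᵢ(xᵢ) = ⋂ᵢ ⋂_{xᵢ} Kᵢ(xᵢ)`. -/
theorem stmt12 {ι : Type*} {X : ι → Type*} [∀ i, TopologicalSpace (X i)]
    [∀ i, CompactSpace (X i)] [∀ i, T2Space (X i)]
    (A P : (∀ i, X i) → ∀ i, Set (X i))
    (hne : ∀ x i, (A x i).Nonempty)
    (husc : ∀ (i : ι) (x : ∀ i, X i) (V : Set (X i)), IsOpen V →
      closure (A x i) ⊆ V →
      ∃ U, IsOpen U ∧ x ∈ U ∧ ∀ x' ∈ U, closure (A x' i) ⊆ V)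
    (hAop : ∀ (i : ι) (y : X i), IsOpen {x : ∀ i, X i | y ∈ A x i})
    (hPop : ∀ (i : ι) (y : X i), IsOpen {x : ∀ i, X i | y ∈ P x i}) :
    (⋂ i : ι, ⋂ xi : X i,
      closure (({x : ∀ i, X i | x i ∈ closure (A x i)} ∩ {x | xi ∈ P x i}ᶜ) ∪
        {x | xi ∈ A x i}ᶜ)) =
    ⋂ i : ι, ⋂ xi : X i,
      (({x : ∀ i, X i | x i ∈ closure (A x i)} ∩ {x | xi ∈ P x i}ᶜ) ∪
        {x | xi ∈ A x i}ᶜ) := by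
  have hF : ∀ i : ι, IsClosed {x : ∀ i, X i | x i ∈ closure (A x i)} := by
    intro i
    rw [← isOpen_compl_iff, isOpen_iff_forall_mem_open]
    intro x hx
    simp only [Set.mem_compl_iff, Set.mem_setOf_eq] at hx
    -- separate the point `x i` from the compact closed set `closure (A x i)`
    obtain ⟨W, V, hWopen, hVopen, hxW, hAV, hdisj⟩ :=
      NormalSpace.normal {x i} (closure (A x i)) isClosed_singleton
        isClosed_closure (by simpa using hx)
    obtain ⟨U, hUopen, hxU, hU⟩ := husc i x V hVopen hAV
    refine ⟨U ∩ (fun y => y i) ⁻¹' W, ?_, ?_, ?_⟩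
    · intro y ⟨hyU, hyW⟩
      simp only [Set.mem_compl_iff, Set.mem_setOf_eq]
      intro hmem
      exact hdisj.ne_of_mem hyW (hU y hyU hmem) rfl
    · exact hUopen.inter ((continuous_apply i).isOpen_preimage W hWopen)
    · exact ⟨hxU, hxW (by simp)⟩
  have hclosed : ∀ (i : ι) (xi : X i),
      IsClosed (({x : ∀ i, X i | x i ∈ closure (A x i)} ∩ {x | xi ∈ P x i}ᶜ) ∪
        {x | xi ∈ A x i}ᶜ) :=
    fun i xi => ((hF i).inter (hPop i xi).isClosed_compl).union
      (hAop i xi).isClosed_compl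
  exact Set.iInter_congr fun i => Set.iInter_congr fun xi => (hclosed i xi).closure_eq
end
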